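/- Let 0 < p < ∞ and 0 < q < r ≤ ∞. The Bernstein numbers of the embedding id : ℓ_{p,q} → ℓ_{p,r} are bounded below: there is α > 0 such that b_n(id) ≥ α for all n ∈ ℕ. Consequently, the embedding is not finitely strictly singular. -/

import Mathlib

open Filter MeasureTheory Set
open scoped ENNReal NNReal Topology

/-- Non-increasing rearrangement of a sequence (0-indexed: `rearr u j` is the
`(j+1)`-th largest value of `|u|`). -/
noncomputable def rearr (u : ℕ → ℝ) (j : ℕ) : ℝ :=
  sInf {t : ℝ | 0 ≤ t ∧ Set.encard {i : ℕ | t < |u i|} ≤ (j : ℕ∞)}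

/-- Lorentz sequence quasi-norm `‖u‖_{p,q}` for `q < ∞`. -/
noncomputable def lorentzNorm (p q : ℝ) (u : ℕ → ℝ) : ℝ≥0∞ :=
  (∑' j : ℕ, ENNReal.ofReal (((j : ℝ) + 1) ^ (q / p - 1) * rearr u j ^ q)) ^ (1 / q)

/-- Lorentz sequence quasi-norm `‖u‖_{p,∞}`. -/
noncomputable def lorentzNormInf (p : ℝ) (u : ℕ → ℝ) : ℝ≥0∞ :=
  ⨆ j : ℕ, ENNReal.ofReal (((j : ℝ) + 1) ^ (1 / p) * rearr u j)

/-- Lorentz sequence quasi-norm with extended second index. -/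
noncomputable def lorentzNormE (p : ℝ) (q : ℝ≥0∞) (u : ℕ → ℝ) : ℝ≥0∞ :=
  if q = ⊤ then lorentzNormInf p u else lorentzNorm p q.toReal u

/-!
On the `n`-dimensional space of Rademacher sums `x = ∑ₖ aₖ rₖ`, spread over `2ⁿ` coordinates (one
for each sign pattern `ε`, where `x` takes the value `∑ₖ aₖ εₖ`), every Lorentz quasi-norm
`‖x‖_{p,s}` is comparable to `2^{n/p} ‖a‖₂` with constants independent of `n`.

Upper bound: Khintchine's inequality for moments of order `2t > p` together with Markov's inequality
gives the weak-type estimate `x*_j ≤ C ‖a‖₂ (2ⁿ / (j + 1))^{1/2t}`, and the `ℓ_{p,q}` sum of the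
right side over `j < 2ⁿ` is `≤ C' 2^{nq/p} ‖a‖₂^q` because `1/p - 1/2t > 0`.

Lower bound: the Paley–Zygmund inequality (second moment `2ⁿ ‖a‖₂²`, fourth moment
`≤ 12 · 2ⁿ ‖a‖₂⁴`) shows that at least `3/64 · 2ⁿ` coordinates satisfy `|xᵢ| > ‖a‖₂ / 2`, so the
first `3/64 · 2ⁿ` terms of the rearrangement are `≥ ‖a‖₂ / 2`, which forces
`‖x‖_{p,r} ≥ c 2^{n/p} ‖a‖₂`.
-/

open Finset

section Rearrangement

variable (u : ℕ → ℝ) {j : ℕ}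

lemma rearr_nonneg (j : ℕ) : 0 ≤ rearr u j :=
  Real.sInf_nonneg fun _ ht => ht.1

variable {u}

lemma rearr_le {τ : ℝ} (hτ : 0 ≤ τ) (h : {i | τ < |u i|}.encard ≤ j) : rearr u j ≤ τ :=
  csInf_le ⟨0, fun _ ht => ht.1⟩ ⟨hτ, h⟩

lemma le_rearr {T c : ℝ} (hT : ∀ i, |u i| ≤ T) (h : (j : ℕ∞) < {i | c < |u i|}.encard) :
    c ≤ rearr u j := by
  have hT₀ : 0 ≤ T := (abs_nonneg _).trans (hT 0)
  have hempty : {i | T < |u i|} = ∅ := Set.eq_empty_of_forall_notMem fun i hi => (hT i).not_gt hi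
  refine le_csInf ⟨T, hT₀, by simp [hempty]⟩ fun τ ⟨_, hτ⟩ => ?_
  by_contra! hτc
  have hsub : {i | c < |u i|} ⊆ {i | τ < |u i|} := fun i hi => hτc.trans hi
  exact (h.trans_le ((Set.encard_le_encard hsub).trans hτ)).false

end Rearrangement

section ExtendByZero

open Function

variable {ι : Type*} [Fintype ι] (e : ι ↪ ℕ) (f : ι → ℝ) {j : ℕ}

lemma encard_lt_abs_extend {τ : ℝ} (hτ : 0 ≤ τ) :
    {i | τ < |extend e f 0 i|}.encard = #{x | τ < |f x|} := by
  have : {i | τ < |extend e f 0 i|} = e '' {x | τ < |f x|} := by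
    ext i
    by_cases hi : ∃ x, e x = i
    · obtain ⟨x, rfl⟩ := hi
      simp [e.injective.extend_apply]
    · simp only [Set.mem_ofPred_eq, extend_apply' _ _ _ hi, Pi.zero_apply, abs_zero,
        Set.mem_image]
      exact ⟨fun h => (hτ.not_gt h).elim, fun ⟨x, _, hx⟩ => (hi ⟨x, hx⟩).elim⟩
  rw [this, e.injective.encard_image, ← Set.encard_coe_eq_coe_finsetCard, Finset.coe_filter]
  simp

lemma abs_extend_le_sum (i : ℕ) : |extend e f 0 i| ≤ ∑ x, |f x| := by
  by_cases hi : ∃ x, e x = i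
  · obtain ⟨x, rfl⟩ := hi
    rw [e.injective.extend_apply]
    exact Finset.single_le_sum (fun y _ => abs_nonneg (f y)) (Finset.mem_univ x)
  · rw [extend_apply' _ _ _ hi, Pi.zero_apply, abs_zero]
    exact Finset.sum_nonneg fun y _ => abs_nonneg (f y)

variable {e f}

lemma rearr_extend_le {τ : ℝ} (hτ : 0 ≤ τ) (h : #{x | τ < |f x|} ≤ j) :
    rearr (extend e f 0) j ≤ τ :=
  rearr_le hτ (by rw [encard_lt_abs_extend e f hτ]; exact_mod_cast h)

lemma le_rearr_extend {c : ℝ} (hc : 0 ≤ c) (h : j < #{x | c < |f x|}) :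
    c ≤ rearr (extend e f 0) j :=
  le_rearr (abs_extend_le_sum e f) (by rw [encard_lt_abs_extend e f hc]; exact_mod_cast h)

lemma rearr_extend_eq_zero (h : Fintype.card ι ≤ j) : rearr (extend e f 0) j = 0 :=
  (rearr_extend_le le_rfl ((Finset.card_filter_le _ _).trans h)).antisymm (rearr_nonneg _ _)

lemma rearr_extend_le_of_weakType {m : ℕ} (hm : m ≠ 0) {D : ℝ}
    (hD : ∀ B, 0 < B → #{x | B < |f x|} * B ^ m ≤ D) (j : ℕ) :
    rearr (extend e f 0) j ≤ (D / (j + 1)) ^ (m⁻¹ : ℝ) := by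
  have hD₀ : 0 ≤ D := (hD 1 one_pos).trans' (by positivity)
  refine le_of_forall_gt_imp_ge_of_dense fun τ hτ => rearr_extend_le ?_ ?_
  · exact (Real.rpow_nonneg (by positivity) _).trans hτ.le
  have hτ₀ : 0 < τ := (Real.rpow_nonneg (by positivity) _).trans_lt hτ
  have hτm : D / (j + 1) < τ ^ m := by
    calc D / (j + 1) = ((D / (j + 1)) ^ (m⁻¹ : ℝ)) ^ m :=
          (Real.rpow_inv_natCast_pow (by positivity) hm).symm
      _ < τ ^ m := pow_lt_pow_left₀ hτ (Real.rpow_nonneg (by positivity) _) hm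
  have : (#{x | τ < |f x|} : ℝ) < j + 1 := by
    rw [div_lt_iff₀ (by positivity)] at hτm
    exact lt_of_mul_lt_mul_right ((hD τ hτ₀).trans_lt (by linarith)) (by positivity)
  exact_mod_cast Nat.lt_succ_iff.mp (by exact_mod_cast this)

end ExtendByZero

section PowerSums

variable {β x : ℝ}

lemma rpow_add_one_eq_mul_add (hx : 0 ≤ x) (β : ℝ) :
    (x + 1) ^ β = x * (x + 1) ^ (β - 1) + (x + 1) ^ (β - 1) := by
  rw [Real.rpow_sub_one (by positivity)]
  field_simp

lemma min_mul_rpow_le_rpow_add_one_sub_rpow (hβ : 0 < β) (hx : 0 ≤ x) :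
    min β 1 * (x + 1) ^ (β - 1) ≤ (x + 1) ^ β - x ^ β := by
  have hx₁ : 0 < x + 1 := by linarith
  rcases le_total β 1 with hβ₁ | hβ₁
  · have h := rpow_one_add_le_one_add_mul_self (s := -(x + 1)⁻¹)
      (neg_le_neg (inv_le_one_of_one_le₀ (by linarith))) hβ.le hβ₁
    rw [show 1 + -(x + 1)⁻¹ = x / (x + 1) by field_simp; ring, Real.div_rpow hx hx₁.le,
      div_le_iff₀ (by positivity)] at h
    rw [min_eq_left hβ₁, Real.rpow_sub_one hx₁.ne', div_eq_mul_inv]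
    linear_combination h
  · rw [min_eq_right hβ₁, one_mul, rpow_add_one_eq_mul_add hx β, add_sub_right_comm]
    refine le_add_of_nonneg_left (sub_nonneg.2 ?_)
    rcases hx.eq_or_lt with rfl | hx₀
    · simp [Real.zero_rpow hβ.ne']
    · calc x ^ β = x * x ^ (β - 1) := by rw [Real.rpow_sub_one hx₀.ne']; field_simp
        _ ≤ x * (x + 1) ^ (β - 1) := by gcongr; linarith

lemma rpow_add_one_sub_rpow_le_max_mul (hβ : 0 < β) (hx : 0 ≤ x) :
    (x + 1) ^ β - x ^ β ≤ max β 1 * (x + 1) ^ (β - 1) := by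
  have hx₁ : 0 < x + 1 := by linarith
  rcases le_total β 1 with hβ₁ | hβ₁
  · rw [max_eq_right hβ₁, one_mul, rpow_add_one_eq_mul_add hx β, add_sub_right_comm]
    refine add_le_of_nonpos_left (sub_nonpos.2 ?_)
    rcases hx.eq_or_lt with rfl | hx₀
    · simp [Real.zero_rpow hβ.ne']
    · calc x * (x + 1) ^ (β - 1) ≤ x * x ^ (β - 1) := by
            gcongr ?_ * ?_
            exact Real.rpow_le_rpow_of_nonpos hx₀ (by linarith) (by linarith)
        _ = x ^ β := by rw [Real.rpow_sub_one hx₀.ne']; field_simp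
  · have h := one_add_mul_self_le_rpow_one_add (s := -(x + 1)⁻¹)
      (neg_le_neg (inv_le_one_of_one_le₀ (by linarith))) hβ₁
    rw [show 1 + -(x + 1)⁻¹ = x / (x + 1) by field_simp; ring, Real.div_rpow hx hx₁.le,
      le_div_iff₀ (by positivity)] at h
    rw [max_eq_left hβ₁, Real.rpow_sub_one hx₁.ne', div_eq_mul_inv]
    linear_combination h

lemma sum_range_rpow_add_one_sub_rpow (hβ : β ≠ 0) (N : ℕ) :
    ∑ j ∈ range N, (((j : ℝ) + 1) ^ β - (j : ℝ) ^ β) = (N : ℝ) ^ β := by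
  have := Finset.sum_range_sub (fun j : ℕ => (j : ℝ) ^ β) N
  push_cast at this
  rwa [Real.zero_rpow hβ, sub_zero] at this

lemma min_mul_sum_range_rpow_le (hβ : 0 < β) (N : ℕ) :
    min β 1 * ∑ j ∈ range N, ((j : ℝ) + 1) ^ (β - 1) ≤ (N : ℝ) ^ β := by
  rw [← sum_range_rpow_add_one_sub_rpow hβ.ne', Finset.mul_sum]
  exact Finset.sum_le_sum fun j _ => min_mul_rpow_le_rpow_add_one_sub_rpow hβ j.cast_nonneg

lemma rpow_le_max_mul_sum_range (hβ : 0 < β) (N : ℕ) :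
    (N : ℝ) ^ β ≤ max β 1 * ∑ j ∈ range N, ((j : ℝ) + 1) ^ (β - 1) := by
  rw [← sum_range_rpow_add_one_sub_rpow hβ.ne', Finset.mul_sum]
  exact Finset.sum_le_sum fun j _ => rpow_add_one_sub_rpow_le_max_mul hβ j.cast_nonneg

end PowerSums

section LorentzBounds

variable {p q m D c : ℝ} {N M : ℕ} {u : ℕ → ℝ}

lemma lorentzNorm_le_of_rearr_le (hp : 0 < p) (hq : 0 < q) (hpm : p < m) (hD : 0 ≤ D)
    (hsupp : ∀ j, N ≤ j → rearr u j = 0) (hu : ∀ j : ℕ, rearr u j ≤ (D / (j + 1)) ^ (1 / m)) :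
    lorentzNorm p q u ≤
      ENNReal.ofReal (min (q / p - q / m) 1 ^ (-(1 / q)) * D ^ (1 / m) * N ^ (1 / p - 1 / m)) := by
  set β := q / p - q / m
  have hβ : 0 < β := sub_pos.2 (div_lt_div_of_pos_left hq hp hpm)
  have hμ : 0 < min β 1 := lt_min hβ one_pos
  have hterm (j : ℕ) : ((j : ℝ) + 1) ^ (q / p - 1) * rearr u j ^ q
      ≤ D ^ (q / m) * ((j : ℝ) + 1) ^ (β - 1) := by
    have hj : (0 : ℝ) < j + 1 := by positivity
    calc ((j : ℝ) + 1) ^ (q / p - 1) * rearr u j ^ q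
        ≤ ((j : ℝ) + 1) ^ (q / p - 1) * ((D / (j + 1)) ^ (1 / m)) ^ q := by
          gcongr
          exacts [rearr_nonneg u j, hu j]
      _ = D ^ (q / m) * ((j : ℝ) + 1) ^ (β - 1) := by
          rw [← Real.rpow_mul (by positivity), show 1 / m * q = q / m by ring,
            Real.div_rpow hD hj.le, show β - 1 = (q / p - 1) - q / m by ring,
            Real.rpow_sub hj (q / p - 1) (q / m)]
          ring
  have hsum : ∑' j : ℕ, ENNReal.ofReal (((j : ℝ) + 1) ^ (q / p - 1) * rearr u j ^ q)
      ≤ ENNReal.ofReal (D ^ (q / m) * N ^ β / min β 1) := by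
    rw [tsum_eq_sum (s := range N) fun j hj => by
      rw [hsupp j (by simpa using hj), Real.zero_rpow hq.ne', mul_zero, ENNReal.ofReal_zero]]
    calc ∑ j ∈ range N, ENNReal.ofReal (((j : ℝ) + 1) ^ (q / p - 1) * rearr u j ^ q)
        ≤ ∑ j ∈ range N, ENNReal.ofReal (D ^ (q / m) * ((j : ℝ) + 1) ^ (β - 1)) :=
          Finset.sum_le_sum fun j _ => ENNReal.ofReal_le_ofReal (hterm j)
      _ = ENNReal.ofReal (D ^ (q / m) * ∑ j ∈ range N, ((j : ℝ) + 1) ^ (β - 1)) := by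
          rw [← ENNReal.ofReal_sum_of_nonneg fun j _ => by positivity, Finset.mul_sum]
      _ ≤ ENNReal.ofReal (D ^ (q / m) * N ^ β / min β 1) := by
          rw [mul_div_assoc]
          gcongr
          rw [le_div_iff₀ hμ, mul_comm]
          exact min_mul_sum_range_rpow_le hβ N
  calc lorentzNorm p q u ≤ ENNReal.ofReal (D ^ (q / m) * N ^ β / min β 1) ^ (1 / q) :=
        ENNReal.rpow_le_rpow hsum (by positivity)
    _ = _ := by
        rw [ENNReal.ofReal_rpow_of_nonneg (by positivity) (by positivity)]
        congr 1
        rw [div_eq_mul_inv, Real.mul_rpow (by positivity) (by positivity),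
          Real.mul_rpow (by positivity) (by positivity), ← Real.rpow_mul hD,
          ← Real.rpow_mul (by positivity), Real.inv_rpow hμ.le, ← Real.rpow_neg hμ.le]
        rw [show q / m * (1 / q) = 1 / m by field_simp, show β * (1 / q) = 1 / p - 1 / m by
          simp only [β]; field_simp]
        ring

lemma ofReal_le_lorentzNormInf (hp : 0 < p) (hu : ∀ j < M, c ≤ rearr u j) :
    ENNReal.ofReal (M ^ (1 / p) * c) ≤ lorentzNormInf p u := by
  rcases M with _ | k
  · simp [Real.zero_rpow, hp.ne']
  refine le_iSup_of_le k (ENNReal.ofReal_le_ofReal ?_)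
  push_cast
  gcongr
  exact hu k k.lt_succ_self

lemma ofReal_le_lorentzNorm (hp : 0 < p) (hq : 0 < q) (hc : 0 ≤ c)
    (hu : ∀ j < M, c ≤ rearr u j) :
    ENNReal.ofReal (max (q / p) 1 ^ (-(1 / q)) * M ^ (1 / p) * c) ≤ lorentzNorm p q u := by
  set γ := q / p
  have hγ : 0 < γ := div_pos hq hp
  have hμ : 0 < max γ 1 := lt_max_of_lt_right one_pos
  have hsum : ENNReal.ofReal (M ^ γ * c ^ q / max γ 1)
      ≤ ∑' j : ℕ, ENNReal.ofReal (((j : ℝ) + 1) ^ (γ - 1) * rearr u j ^ q) := by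
    refine le_trans ?_ (ENNReal.sum_le_tsum (range M))
    rw [← ENNReal.ofReal_sum_of_nonneg fun j _ => by have := rearr_nonneg u j; positivity]
    refine ENNReal.ofReal_le_ofReal ?_
    calc (M : ℝ) ^ γ * c ^ q / max γ 1
        ≤ (∑ j ∈ range M, ((j : ℝ) + 1) ^ (γ - 1)) * c ^ q := by
          rw [div_le_iff₀ hμ, mul_right_comm]
          gcongr
          rw [mul_comm]
          exact rpow_le_max_mul_sum_range hγ M
      _ = ∑ j ∈ range M, ((j : ℝ) + 1) ^ (γ - 1) * c ^ q := Finset.sum_mul ..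
      _ ≤ ∑ j ∈ range M, ((j : ℝ) + 1) ^ (γ - 1) * rearr u j ^ q := by
          gcongr with j hj
          exact hu j (Finset.mem_range.1 hj)
  calc ENNReal.ofReal (max γ 1 ^ (-(1 / q)) * M ^ (1 / p) * c)
      = ENNReal.ofReal (M ^ γ * c ^ q / max γ 1) ^ (1 / q) := by
        rw [ENNReal.ofReal_rpow_of_nonneg (by positivity) (by positivity)]
        congr 1
        rw [div_eq_mul_inv ((M : ℝ) ^ γ * c ^ q), Real.mul_rpow (by positivity) (by positivity),
          Real.mul_rpow (by positivity) (by positivity), ← Real.rpow_mul (by positivity),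
          ← Real.rpow_mul hc, Real.inv_rpow hμ.le, ← Real.rpow_neg hμ.le,
          show γ * (1 / q) = 1 / p by simp only [γ]; field_simp,
          show q * (1 / q) = 1 by field_simp, Real.rpow_one]
        ring
    _ ≤ lorentzNorm p q u := ENNReal.rpow_le_rpow hsum (by positivity)

lemma exists_ofReal_le_lorentzNormE (hp : 0 < p) {r : ℝ≥0∞} (hr : r ≠ 0) :
    ∃ κ > 0, ∀ (u : ℕ → ℝ) (M : ℕ) (c : ℝ), 0 ≤ c → (∀ j < M, c ≤ rearr u j) →
      ENNReal.ofReal (κ * M ^ (1 / p) * c) ≤ lorentzNormE p r u := by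
  by_cases hr' : r = ⊤
  · refine ⟨1, one_pos, fun u M c _ hu => ?_⟩
    simpa [lorentzNormE, hr'] using ofReal_le_lorentzNormInf hp hu
  · have hr₀ : 0 < r.toReal := ENNReal.toReal_pos hr hr'
    refine ⟨max (r.toReal / p) 1 ^ (-(1 / r.toReal)),
      Real.rpow_pos_of_pos (lt_max_of_lt_right one_pos) _, fun u M c hc hu => ?_⟩
    simpa [lorentzNormE, hr'] using ofReal_le_lorentzNorm hp hr₀ hc hu

end LorentzBounds

section Rademacher

def boolSign (b : Bool) : ℝ := if b then 1 else -1

@[simps]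
def rademacherSum (n : ℕ) : (Fin n → ℝ) →ₗ[ℝ] (Fin n → Bool) → ℝ where
  toFun a ε := ∑ k, a k * boolSign (ε k)
  map_add' a b := by ext ε; simp [add_mul, Finset.sum_add_distrib]
  map_smul' c a := by ext ε; simp [Finset.mul_sum, mul_assoc]

lemma sum_pi_bool_succ {M : Type*} [AddCommMonoid M] {n : ℕ} (F : (Fin (n + 1) → Bool) → M) :
    ∑ ε, F ε = ∑ ε : Fin n → Bool, (F (Fin.cons true ε) + F (Fin.cons false ε)) := by
  rw [← (Fin.consEquiv fun _ => Bool).sum_comp, Fintype.sum_prod_type, Fintype.sum_bool,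
    ← Finset.sum_add_distrib]
  rfl

variable {n : ℕ}

lemma sum_rademacherSum_succ (a : Fin (n + 1) → ℝ) (g : ℝ → ℝ) :
    ∑ ε, g (rademacherSum (n + 1) a ε) = ∑ ε, (g (rademacherSum n (Fin.tail a) ε + a 0)
      + g (rademacherSum n (Fin.tail a) ε - a 0)) := by
  rw [sum_pi_bool_succ]
  congr! 3 <;>
    simp only [rademacherSum_apply, boolSign, Fin.sum_univ_succ, Fin.cons_zero, Fin.cons_succ,
      Fin.tail, if_true, Bool.false_eq_true, if_false] <;> ring

lemma sum_rademacherSum_sq (a : Fin n → ℝ) :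
    ∑ ε, rademacherSum n a ε ^ 2 = 2 ^ n * ∑ k, a k ^ 2 := by
  induction n with
  | zero => simp
  | succ n ih =>
    rw [sum_rademacherSum_succ a (· ^ 2), Fin.sum_univ_succ]
    simp_rw [show ∀ y : ℝ, (y + a 0) ^ 2 + (y - a 0) ^ 2 = 2 * y ^ 2 + 2 * a 0 ^ 2 by
      intro y; ring]
    rw [Finset.sum_add_distrib, ← Finset.mul_sum, ih, Finset.sum_const, Finset.card_univ,
      Fintype.card_fun, Fintype.card_bool, Fintype.card_fin, nsmul_eq_mul]
    simp only [Fin.tail, Nat.cast_pow, Nat.cast_ofNat]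
    ring

end Rademacher

section Khintchine

open scoped Nat

lemma sum_range_two_mul_add_one {M : Type*} [AddCommMonoid M] (f : ℕ → M) (s : ℕ) :
    ∑ j ∈ range (2 * s + 1), f j =
      ∑ i ∈ range (s + 1), f (2 * i) + ∑ i ∈ range s, f (2 * i + 1) := by
  induction s with
  | zero => simp
  | succ s ih =>
    rw [show 2 * (s + 1) + 1 = 2 * s + 1 + 1 + 1 by ring, Finset.sum_range_succ,
      Finset.sum_range_succ, ih, Finset.sum_range_succ (fun i => f (2 * i)) (s + 1),
      Finset.sum_range_succ (fun i => f (2 * i + 1)) s, show 2 * (s + 1) = 2 * s + 1 + 1 by ring]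
    abel

lemma add_pow_add_sub_pow_two_mul (y b : ℝ) (s : ℕ) :
    (y + b) ^ (2 * s) + (y - b) ^ (2 * s)
      = 2 * ∑ i ∈ range (s + 1),
          ((2 * s).choose (2 * i) : ℝ) * y ^ (2 * i) * (b ^ 2) ^ (s - i) := by
  rw [add_pow, sub_eq_add_neg, add_pow, ← Finset.sum_add_distrib, sum_range_two_mul_add_one,
    Finset.mul_sum]
  have hodd : ∀ i ∈ range s,
      y ^ (2 * i + 1) * b ^ (2 * s - (2 * i + 1)) * ((2 * s).choose (2 * i + 1) : ℝ)
        + y ^ (2 * i + 1) * (-b) ^ (2 * s - (2 * i + 1)) * ((2 * s).choose (2 * i + 1) : ℝ)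
        = 0 := by
    intro i hi
    have : Odd (2 * s - (2 * i + 1)) := ⟨s - i - 1, by have := Finset.mem_range.1 hi; omega⟩
    rw [this.neg_pow]
    ring
  rw [Finset.sum_eq_zero hodd, add_zero]
  refine Finset.sum_congr rfl fun i hi => ?_
  have hi : i ≤ s := Nat.lt_succ_iff.1 (Finset.mem_range.1 hi)
  rw [show 2 * s - 2 * i = 2 * (s - i) by omega, (even_two_mul _).neg_pow, pow_mul]
  ring

lemma factorial_mul_choose_mul_factorial_le {s i : ℕ} (h : i ≤ s) :
    s ! * (2 * s).choose (2 * i) * (2 * i)! ≤ (2 * s)! * s.choose i * i ! := by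
  have h₁ : (2 * s).choose (2 * i) * (2 * i)! * (2 * (s - i))! = (2 * s)! := by
    rw [show 2 * (s - i) = 2 * s - 2 * i by omega]
    exact Nat.choose_mul_factorial_mul_factorial (by omega)
  have h₂ := Nat.choose_mul_factorial_mul_factorial h
  refine Nat.le_of_mul_le_mul_right ?_ (Nat.factorial_pos (2 * (s - i)))
  calc s ! * (2 * s).choose (2 * i) * (2 * i)! * (2 * (s - i))!
      = s ! * ((2 * s).choose (2 * i) * (2 * i)! * (2 * (s - i))!) := by ring
    _ = (2 * s)! * (s.choose i * i ! * (s - i)!) := by rw [h₁, h₂, mul_comm]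
    _ ≤ (2 * s)! * s.choose i * i ! * (2 * (s - i))! := by
        rw [← mul_assoc, ← mul_assoc]; gcongr; omega

variable {n : ℕ}

lemma sum_rademacherSum_succ_pow (a : Fin (n + 1) → ℝ) (s : ℕ) :
    ∑ ε, rademacherSum (n + 1) a ε ^ (2 * s) = 2 * ∑ i ∈ range (s + 1),
      ((2 * s).choose (2 * i) : ℝ) * (∑ ε, rademacherSum n (Fin.tail a) ε ^ (2 * i)) *
        (a 0 ^ 2) ^ (s - i) := by
  simp_rw [sum_rademacherSum_succ a (· ^ (2 * s)), add_pow_add_sub_pow_two_mul, Finset.mul_sum]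
  rw [Finset.sum_comm]
  simp_rw [Finset.sum_mul, Finset.mul_sum]

theorem sum_rademacherSum_pow_le (a : Fin n → ℝ) (s : ℕ) :
    s ! * ∑ ε, rademacherSum n a ε ^ (2 * s) ≤ (2 * s)! * 2 ^ n * (∑ k, a k ^ 2) ^ s := by
  induction n generalizing s with
  | zero => cases s <;> simp
  | succ n ih =>
    set A := ∑ k, Fin.tail a k ^ 2
    set S : ℕ → ℝ := fun i => ∑ ε, rademacherSum n (Fin.tail a) ε ^ (2 * i)
    have hterm (i : ℕ) (hi : i ≤ s) :
        (s ! : ℝ) * ((2 * s).choose (2 * i) * S i) ≤ (2 * s)! * s.choose i * (2 ^ n * A ^ i) := by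
      have hcomb : (s ! * (2 * s).choose (2 * i) * (2 * i)! : ℝ) ≤ (2 * s)! * s.choose i * i ! := by
        exact_mod_cast factorial_mul_choose_mul_factorial_le hi
      refine le_of_mul_le_mul_left ?_ (Nat.cast_pos.2 (Nat.factorial_pos i))
      calc (i ! : ℝ) * (s ! * ((2 * s).choose (2 * i) * S i))
          = s ! * (2 * s).choose (2 * i) * (i ! * S i) := by ring
        _ ≤ s ! * (2 * s).choose (2 * i) * ((2 * i)! * 2 ^ n * A ^ i) :=
            mul_le_mul_of_nonneg_left (ih _ i) (by positivity)
        _ = s ! * (2 * s).choose (2 * i) * (2 * i)! * (2 ^ n * A ^ i) := by ring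
        _ ≤ (2 * s)! * s.choose i * i ! * (2 ^ n * A ^ i) := by gcongr
        _ = i ! * ((2 * s)! * s.choose i * (2 ^ n * A ^ i)) := by ring
    calc (s ! : ℝ) * ∑ ε, rademacherSum (n + 1) a ε ^ (2 * s)
        = 2 * ∑ i ∈ range (s + 1),
            s ! * ((2 * s).choose (2 * i) * S i) * (a 0 ^ 2) ^ (s - i) := by
          rw [sum_rademacherSum_succ_pow, Finset.mul_sum, Finset.mul_sum, Finset.mul_sum]
          exact Finset.sum_congr rfl fun i _ => by ring
      _ ≤ 2 * ∑ i ∈ range (s + 1),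
            (2 * s)! * s.choose i * (2 ^ n * A ^ i) * (a 0 ^ 2) ^ (s - i) := by
          gcongr 2 * ∑ i ∈ _, ?_ * _ with i hi
          exact hterm i (Nat.lt_succ_iff.1 (Finset.mem_range.1 hi))
      _ = (2 * s)! * 2 ^ (n + 1) * (A + a 0 ^ 2) ^ s := by
          rw [add_pow, Finset.mul_sum, Finset.mul_sum]
          exact Finset.sum_congr rfl fun i _ => by ring
      _ = (2 * s)! * 2 ^ (n + 1) * (∑ k, a k ^ 2) ^ s := by
          congr 2
          rw [Fin.sum_univ_succ, add_comm]
          rfl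

end Khintchine

section Tails

variable {ι : Type*} [Fintype ι] (f : ι → ℝ)

lemma card_lt_abs_mul_pow_le_sum {B : ℝ} (hB : 0 ≤ B) (k : ℕ) :
    #{x | B < |f x|} * B ^ k ≤ ∑ x, |f x| ^ k := by
  calc (#{x | B < |f x|} : ℝ) * B ^ k = ∑ x with B < |f x|, B ^ k := by
        rw [Finset.sum_const, nsmul_eq_mul]
    _ ≤ ∑ x with B < |f x|, |f x| ^ k := Finset.sum_le_sum fun x hx =>
        pow_le_pow_left₀ hB (Finset.mem_filter.1 hx).2.le k
    _ ≤ ∑ x, |f x| ^ k :=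
        Finset.sum_le_sum_of_subset_of_nonneg (Finset.filter_subset _ _) fun _ _ _ => by positivity

lemma sq_sum_sq_sub_le_card_mul_sum_pow_four {c : ℝ}
    (h : Fintype.card ι * c ^ 2 ≤ ∑ x, f x ^ 2) :
    (∑ x, f x ^ 2 - Fintype.card ι * c ^ 2) ^ 2 ≤ #{x | c < |f x|} * ∑ x, f x ^ 4 := by
  have hsmall : ∑ x with ¬c < |f x|, f x ^ 2 ≤ Fintype.card ι * c ^ 2 :=
    calc ∑ x with ¬c < |f x|, f x ^ 2 ≤ ∑ x with ¬c < |f x|, c ^ 2 :=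
          Finset.sum_le_sum fun x hx =>
            sq_le_sq.2 ((not_lt.1 (Finset.mem_filter.1 hx).2).trans (le_abs_self c))
      _ ≤ Fintype.card ι * c ^ 2 := by
          rw [Finset.sum_const, nsmul_eq_mul]
          gcongr
          exact_mod_cast Finset.card_le_univ _
  have hlarge : ∑ x, f x ^ 2 - Fintype.card ι * c ^ 2 ≤ ∑ x with c < |f x|, f x ^ 2 := by
    linarith [Finset.sum_filter_add_sum_filter_not Finset.univ (fun x => c < |f x|) (f · ^ 2)]
  calc (∑ x, f x ^ 2 - Fintype.card ι * c ^ 2) ^ 2 ≤ (∑ x with c < |f x|, f x ^ 2) ^ 2 :=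
        pow_le_pow_left₀ (sub_nonneg.2 h) hlarge 2
    _ ≤ #{x | c < |f x|} * ∑ x with c < |f x|, (f x ^ 2) ^ 2 := sq_sum_le_card_mul_sum_sq
    _ = #{x | c < |f x|} * ∑ x with c < |f x|, f x ^ 4 := by simp_rw [← pow_mul]
    _ ≤ #{x | c < |f x|} * ∑ x, f x ^ 4 := by
        gcongr
        exact Finset.filter_subset _ _

end Tails

section RademacherTails

open scoped Nat

variable {n : ℕ} (a : Fin n → ℝ)

lemma card_lt_abs_rademacherSum_mul_pow_le {B : ℝ} (hB : 0 ≤ B) (s : ℕ) :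
    #{ε | B < |rademacherSum n a ε|} * B ^ (2 * s)
      ≤ (2 * s)! / s ! * 2 ^ n * (∑ k, a k ^ 2) ^ s := by
  refine (card_lt_abs_mul_pow_le_sum _ hB _).trans ?_
  simp_rw [(even_two_mul s).pow_abs]
  rw [mul_assoc, div_mul_eq_mul_div, le_div_iff₀ (by positivity), mul_comm, ← mul_assoc]
  exact sum_rademacherSum_pow_le a s

lemma card_lt_abs_rademacherSum_ge (hA : 0 < ∑ k, a k ^ 2) :
    (3 / 64 : ℝ) * 2 ^ n ≤ #{ε | √(∑ k, a k ^ 2) / 2 < |rademacherSum n a ε|} := by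
  have hPZ := sq_sum_sq_sub_le_card_mul_sum_pow_four (rademacherSum n a) (c := √(∑ k, a k ^ 2) / 2)
  have hfourth : 2 * ∑ ε, rademacherSum n a ε ^ 4 ≤ 24 * 2 ^ n * (∑ k, a k ^ 2) ^ 2 := by
    simpa [Nat.factorial, -rademacherSum_apply] using sum_rademacherSum_pow_le a 2
  simp only [Fintype.card_fun, Fintype.card_bool, Fintype.card_fin, div_pow,
    Real.sq_sqrt hA.le, sum_rademacherSum_sq, Nat.cast_pow, Nat.cast_ofNat] at hPZ
  set A := ∑ k, a k ^ 2
  set M : ℝ := ((#{ε | √A / 2 < |rademacherSum n a ε|} : ℕ) : ℝ)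
  have hpos : 0 < 12 * 2 ^ n * A ^ 2 := by positivity
  refine le_of_mul_le_mul_left ?_ hpos
  calc 12 * 2 ^ n * A ^ 2 * (3 / 64 * 2 ^ n) = (2 ^ n * A - 2 ^ n * (A / 2 ^ 2)) ^ 2 := by ring
    _ ≤ M * ∑ ε, rademacherSum n a ε ^ 4 := hPZ (by nlinarith)
    _ ≤ M * (12 * 2 ^ n * A ^ 2) := by gcongr; linarith
    _ = 12 * 2 ^ n * A ^ 2 * M := by ring

end RademacherTails

section RademacherSequence

open scoped Nat

variable {n : ℕ}

noncomputable def rademacherSeq (e : (Fin n → Bool) ↪ ℕ) : (Fin n → ℝ) →ₗ[ℝ] ℕ → ℝ :=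
  Function.ExtendByZero.linearMap ℝ e ∘ₗ rademacherSum n

lemma rademacherSum_injective : Function.Injective (rademacherSum n) := by
  refine (injective_iff_map_eq_zero _).2 fun a ha => ?_
  have h : 2 ^ n * ∑ k, a k ^ 2 = 0 := by
    rw [← sum_rademacherSum_sq, ha]; simp
  have hA := (mul_eq_zero.1 h).resolve_left (by positivity)
  funext k
  exact pow_eq_zero_iff two_ne_zero |>.1 <|
    (Finset.sum_eq_zero_iff_of_nonneg fun k _ => sq_nonneg (a k)).1 hA k (Finset.mem_univ k)

lemma rademacherSeq_injective (e : (Fin n → Bool) ↪ ℕ) : Function.Injective (rademacherSeq e) :=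
  (Function.extend_injective e.injective 0).comp rademacherSum_injective

theorem exists_lorentzNorm_rademacherSeq_le {p q : ℝ} (hp : 0 < p) (hq : 0 < q) :
    ∃ C > 0, ∀ (n : ℕ) (e : (Fin n → Bool) ↪ ℕ) (a : Fin n → ℝ),
      lorentzNorm p q (rademacherSeq e a) ≤
        ENNReal.ofReal (C * (2 ^ n) ^ (1 / p) * √(∑ k, a k ^ 2)) := by
  set t := ⌈p⌉₊
  set m : ℝ := ((2 * t : ℕ) : ℝ)
  set K : ℝ := (2 * t)! / (t !)
  have ht : 0 < t := Nat.ceil_pos.2 hp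
  have hm : m = 2 * t := by simp [m]
  have hpm : p < m := by rw [hm]; linarith [Nat.le_ceil p]
  have hμ : 0 < min (q / p - q / m) 1 :=
    lt_min (sub_pos.2 (div_lt_div_of_pos_left hq hp hpm)) one_pos
  refine ⟨min (q / p - q / m) 1 ^ (-(1 / q)) * K ^ (1 / m),
    mul_pos (Real.rpow_pos_of_pos hμ _) (Real.rpow_pos_of_pos (by positivity) _), fun n e a => ?_⟩
  set A := ∑ k, a k ^ 2
  have hA : 0 ≤ A := by positivity
  have hweak (B : ℝ) (hB : 0 < B) :
      #{ε | B < |rademacherSum n a ε|} * B ^ (2 * t) ≤ K * 2 ^ n * A ^ t :=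
    card_lt_abs_rademacherSum_mul_pow_le a hB.le t
  refine (lorentzNorm_le_of_rearr_le (u := rademacherSeq e a) (N := 2 ^ n)
    (D := K * 2 ^ n * A ^ t) hp hq hpm (by positivity)
    (fun j hj => rearr_extend_eq_zero (by simpa using hj))
    (fun j => by rw [one_div]; exact rearr_extend_le_of_weakType (by omega) hweak j)).trans
    (ENNReal.ofReal_le_ofReal (le_of_eq ?_))
  have hsqrt : (A ^ t) ^ (1 / m) = √A := by
    rw [Real.sqrt_eq_rpow, ← Real.rpow_natCast, ← Real.rpow_mul hA, hm]
    field_simp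
  rw [Real.mul_rpow (by positivity) (by positivity), Real.mul_rpow (by positivity) (by positivity),
    hsqrt, Nat.cast_pow, Nat.cast_ofNat]
  have h2 : ((2 : ℝ) ^ n) ^ (1 / m) * ((2 : ℝ) ^ n) ^ (1 / p - 1 / m)
      = ((2 : ℝ) ^ n) ^ (1 / p) := by
    rw [← Real.rpow_add (by positivity), add_sub_cancel]
  rw [← h2]
  ring

theorem exists_ofReal_le_lorentzNormE_rademacherSeq {p : ℝ} {r : ℝ≥0∞} (hp : 0 < p) (hr : r ≠ 0) :
    ∃ c > 0, ∀ (n : ℕ) (e : (Fin n → Bool) ↪ ℕ) (a : Fin n → ℝ),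
      ENNReal.ofReal (c * (2 ^ n) ^ (1 / p) * √(∑ k, a k ^ 2))
        ≤ lorentzNormE p r (rademacherSeq e a) := by
  obtain ⟨κ, hκ, hE⟩ := exists_ofReal_le_lorentzNormE hp hr
  refine ⟨κ * (3 / 64) ^ (1 / p) / 2, by positivity, fun n e a => ?_⟩
  set A := ∑ k, a k ^ 2
  rcases (show 0 ≤ A by positivity).eq_or_lt with hA | hA
  · simp [← hA]
  set M := #{ε | √A / 2 < |rademacherSum n a ε|}
  refine le_trans (ENNReal.ofReal_le_ofReal ?_)
    (hE _ M (√A / 2) (by positivity) fun j hj => le_rearr_extend (by positivity) hj)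
  calc κ * (3 / 64) ^ (1 / p) / 2 * ((2 : ℝ) ^ n) ^ (1 / p) * √A
      = κ * ((3 / 64) * 2 ^ n) ^ (1 / p) * (√A / 2) := by
        rw [Real.mul_rpow (by positivity) (by positivity)]; ring
    _ ≤ κ * M ^ (1 / p) * (√A / 2) := by
        gcongr
        exact card_lt_abs_rademacherSum_ge a hA

end RademacherSequence

/-- The Bernstein numbers of the embedding `id : ℓ_{p,q} → ℓ_{p,r}` (for
`0 < p < ∞`, `0 < q < r ≤ ∞`) are bounded below by some `α > 0`: for every
`n` there is an `n`-dimensional subspace of `ℓ_{p,q}` on whose `ℓ_{p,q}`-unit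
sphere the `ℓ_{p,r}` norm is at least `α`.  In particular the embedding is not
finitely strictly singular. -/
theorem bernstein_numbers_bounded_below (p q : ℝ) (r : ℝ≥0∞)
    (hp : 0 < p) (hq : 0 < q) (hqr : ENNReal.ofReal q < r) :
    ∃ α : ℝ, 0 < α ∧ ∀ n : ℕ, ∃ E : Submodule ℝ (ℕ → ℝ),
      Module.finrank ℝ E = n ∧
      (∀ x ∈ E, lorentzNorm p q x ≠ ⊤) ∧
      ∀ x ∈ E, lorentzNorm p q x = 1 → ENNReal.ofReal α ≤ lorentzNormE p r x := by
  obtain ⟨C, hC, hupper⟩ := exists_lorentzNorm_rademacherSeq_le hp hq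
  obtain ⟨c, hc, hlower⟩ := exists_ofReal_le_lorentzNormE_rademacherSeq hp (ne_bot_of_gt hqr)
  refine ⟨c / C, div_pos hc hC, fun n => ?_⟩
  let e : (Fin n → Bool) ↪ ℕ := (Fintype.equivFin _).toEmbedding.trans Fin.valEmbedding
  refine ⟨LinearMap.range (rademacherSeq e), ?_, ?_, ?_⟩
  · rw [LinearMap.finrank_range_of_inj (rademacherSeq_injective e), Module.finrank_fin_fun]
  · rintro _ ⟨a, rfl⟩
    exact ne_top_of_le_ne_top ENNReal.ofReal_ne_top (hupper n e a)
  · rintro _ ⟨a, rfl⟩ hnorm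
    set σ := ((2 : ℝ) ^ n) ^ (1 / p) * √(∑ k, a k ^ 2)
    calc ENNReal.ofReal (c / C) = ENNReal.ofReal (c / C) * lorentzNorm p q (rademacherSeq e a) := by
          rw [hnorm, mul_one]
      _ ≤ ENNReal.ofReal (c / C) * ENNReal.ofReal (C * σ) := by
          gcongr
          simpa only [σ, mul_assoc] using hupper n e a
      _ = ENNReal.ofReal (c * σ) := by
          rw [← ENNReal.ofReal_mul (by positivity)]
          field_simp
      _ ≤ lorentzNormE p r (rademacherSeq e a) := by
          simpa only [σ, mul_assoc] using hlower n e a
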